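/- arXiv:1812.09611 — 5 statements merged into one kernel-verified Lean document; each statement's English description precedes it below -/
import Mathlib

section
/- For p ∈ (0,1) and z > 0 with -z·log(1-p) ≤ 1, the only fixed point of f(q) = 1 - (1-p)^{z q} in [0,1] is q = 0; in particular f(q) < q for all q ∈ (0,1]. -/
open Real

/-- Off `x = 0` this is the strict form of `x + 1 ≤ exp x`; at `x = 0` the left side vanishes. -/
theorem one_sub_exp_lt_of_neg_le {x q : ℝ} (hq : 0 < q) (hx : -x ≤ q) : 1 - exp x < q := by
  rcases eq_or_ne x 0 with rfl | hx0
  · simpa using hq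
  · linarith [add_one_lt_exp hx0]

theorem stmt_3_general (p z : ℝ)
    (hcrit : -z * Real.log (1 - p) ≤ 1) :
    (∀ q ∈ Set.Icc (0:ℝ) 1,
        1 - Real.exp (z * q * Real.log (1 - p)) = q → q = 0) ∧
    (∀ q ∈ Set.Ioc (0:ℝ) 1,
        1 - Real.exp (z * q * Real.log (1 - p)) < q) := by
  have below_diag : ∀ q : ℝ, 0 < q → 1 - exp (z * q * log (1 - p)) < q := fun q hq =>
    one_sub_exp_lt_of_neg_le hq <| by nlinarith [mul_le_mul_of_nonneg_left hcrit hq.le]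
  refine ⟨fun q hq hfix => ?_, fun q hq => below_diag q hq.1⟩
  by_contra hq0
  exact (below_diag q (lt_of_le_of_ne hq.1 (Ne.symm hq0))).ne hfix

/-- If `-z log(1-p) ≤ 1`, the only fixed point of `f` in `[0,1]` is `0`,
and `f(q) < q` on `(0,1]`. -/
theorem stmt_3 (p z : ℝ) (hp : p ∈ Set.Ioo (0:ℝ) 1) (hz : 0 < z)
    (hcrit : -z * Real.log (1 - p) ≤ 1) :
    (∀ q ∈ Set.Icc (0:ℝ) 1,
        1 - Real.exp (z * q * Real.log (1 - p)) = q → q = 0) ∧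
    (∀ q ∈ Set.Ioc (0:ℝ) 1,
        1 - Real.exp (z * q * Real.log (1 - p)) < q) :=
  stmt_3_general p z hcrit
end

section
/- For p ∈ (0,1) and z > 0 with -z·log(1-p) > 1, the map f(q) = 1 - (1-p)^{z q} has exactly one fixed point q* in the open interval (0,1), besides the fixed point at 0. -/
/-!
Write `c = -z log(1 - p) > 1`, so that the map is `q ↦ 1 - exp(-c q)`. Since
`1 - exp(-c q₀) > q₀` at `q₀ = 1 - 1/c` (this is `c < exp(c - 1)`) while `1 - exp(-c) < 1`, the
intermediate value theorem gives a fixed point in `(q₀, 1)`. It is the only one besides `0`: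
the map is strictly concave and fixes `0`, so its secant slopes from `0` are strictly decreasing
and can take the value `1` at most once.
-/

open Real Set Function

theorem StrictConcaveOn.eq_of_isFixedPt {𝕜 : Type*} [Field 𝕜] [LinearOrder 𝕜]
    [IsStrictOrderedRing 𝕜] {s : Set 𝕜} {f : 𝕜 → 𝕜} {a x y : 𝕜} (hf : StrictConcaveOn 𝕜 s f)
    (ha : a ∈ s) (hfa : IsFixedPt f a) (hx : x ∈ s) (hy : y ∈ s) (hxa : x ≠ a) (hya : y ≠ a)
    (hfx : IsFixedPt f x) (hfy : IsFixedPt f y) : x = y := by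
  wlog hxy : x < y generalizing x y
  · exact (le_of_not_gt hxy).lt_or_eq.elim (fun h => (this hy hx hya hxa hfy hfx h).symm) Eq.symm
  have hslope := hf.secant_strict_mono ha hx hy hxa hya hxy
  rw [hfa.eq, hfx.eq, hfy.eq, div_self (sub_ne_zero.2 hxa), div_self (sub_ne_zero.2 hya)] at hslope
  exact absurd hslope (lt_irrefl 1)

theorem strictConvexOn_exp_mul {a : ℝ} (ha : a ≠ 0) :
    StrictConvexOn ℝ univ (fun q => exp (a * q)) := by
  refine ⟨convex_univ, fun x _ y _ hxy s t hs ht hst => ?_⟩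
  have := strictConvexOn_exp.2 (mem_univ (a * x)) (mem_univ (a * y)) (by simpa [ha] using hxy)
    hs ht hst
  simp only [smul_eq_mul] at this ⊢
  rwa [mul_add, mul_left_comm, mul_left_comm a t]

theorem strictConcaveOn_one_sub_exp_mul {a : ℝ} (ha : a ≠ 0) :
    StrictConcaveOn ℝ univ (fun q => 1 - exp (a * q)) :=
  (concaveOn_const 1 convex_univ).sub_strictConvexOn (strictConvexOn_exp_mul ha)

theorem exists_mem_Ioo_one_sub_exp_neg_mul_eq {c : ℝ} (hc : 1 < c) :
    ∃ q ∈ Ioo (0 : ℝ) 1, 1 - exp (-c * q) = q := by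
  have hc0 : 0 < c := one_pos.trans hc
  set q₀ := 1 - c⁻¹
  have hq₀ : q₀ ∈ Ioo 0 1 := ⟨sub_pos.2 (inv_lt_one_of_one_lt₀ hc), by simp [q₀, hc0]⟩
  have hgap : q₀ < 1 - exp (-c * q₀) := by
    have hexp : exp (-c * q₀) = (exp (c - 1))⁻¹ := by
      rw [← exp_neg]; congr 1; simp only [q₀]; field_simp
    have : c < exp (c - 1) := by simpa using add_one_lt_exp (sub_ne_zero.2 hc.ne')
    rw [hexp]
    exact sub_lt_sub_left ((inv_lt_inv₀ (exp_pos _) hc0).2 this) 1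
  let g (q : ℝ) := 1 - exp (-c * q) - q
  have hsign : (0 : ℝ) ∈ Ioo (g 1) (g q₀) := ⟨by simp [g, exp_pos], sub_pos.2 hgap⟩
  obtain ⟨q, hq, hgq⟩ := intermediate_value_Ioo' hq₀.2.le (by fun_prop) hsign
  exact ⟨q, ⟨hq₀.1.trans hq.1, hq.2⟩, sub_eq_zero.1 hgq⟩

theorem stmt_4_general (p z : ℝ)
    (hcrit : 1 < -z * Real.log (1 - p)) :
    ∃! q : ℝ, q ∈ Set.Ioo (0:ℝ) 1 ∧
      1 - Real.exp (z * q * Real.log (1 - p)) = q := by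
  set c := -z * log (1 - p)
  have hexponent (q : ℝ) : z * q * log (1 - p) = -c * q := by ring
  simp_rw [hexponent]
  obtain ⟨q, hq, hfix⟩ := exists_mem_Ioo_one_sub_exp_neg_mul_eq hcrit
  refine ⟨q, ⟨hq, hfix⟩, fun y ⟨hy, hfy⟩ => ?_⟩
  exact (strictConcaveOn_one_sub_exp_mul (by linarith)).eq_of_isFixedPt (mem_univ 0)
    (by simp [IsFixedPt]) (mem_univ y) (mem_univ q) hy.1.ne' hq.1.ne' hfy hfix

/-- If `-z log(1-p) > 1`, `f` has exactly one fixed point in `(0,1)`. -/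
theorem stmt_4 (p z : ℝ) (hp : p ∈ Set.Ioo (0:ℝ) 1) (hz : 0 < z)
    (hcrit : 1 < -z * Real.log (1 - p)) :
    ∃! q : ℝ, q ∈ Set.Ioo (0:ℝ) 1 ∧
      1 - Real.exp (z * q * Real.log (1 - p)) = q :=
  stmt_4_general p z hcrit
end

section
/- If p ∈ (0,1), z > 0, and q* ∈ (0,1) satisfies q* = 1 - (1-p)^{z q*}, then the derivative of f(q) = 1 - (1-p)^{z q} at q* is strictly less than 1 (and positive), so q* is a locally exponentially stable fixed point. -/
/-!
Write `f x = 1 - exp (a * x)` with `a = z log (1 - p) < 0` and `t = -a q*`. The fixed-point equation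
says `1 - q* = exp (-t)`, so `f' q* = -a exp (-t) = t exp (-t) / (1 - exp (-t))`, which is less than
`1` exactly because `t + 1 < exp t`.
-/

open Real

theorem neg_mul_one_sub_lt_one_of_exp_mul_eq {a q : ℝ} (hq : 0 < q)
    (hfix : exp (a * q) = 1 - q) : -a * (1 - q) < 1 := by
  have haq : -(a * q) ≠ 0 := fun h => by
    rw [neg_eq_zero.mp h, exp_zero] at hfix
    linarith
  have hq1 : 0 < 1 - q := hfix ▸ exp_pos _
  have hinv : exp (-(a * q)) * (1 - q) = 1 := by
    rw [← hfix, ← exp_add, neg_add_cancel, exp_zero]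
  have hkey : (-(a * q) + 1) * (1 - q) < 1 :=
    (mul_lt_mul_of_pos_right (add_one_lt_exp haq) hq1).trans_eq hinv
  nlinarith

theorem hasDerivAt_one_sub_exp_mul_mul (b c x : ℝ) :
    HasDerivAt (fun x => 1 - exp (b * x * c)) (-(b * c) * exp (b * x * c)) x :=
  (((hasDerivAt_id' x).const_mul b).mul_const c).exp.const_sub 1 |>.congr_deriv (by ring)

/-- At a nonzero fixed point `q* ∈ (0,1)` of `f`, one has `0 < f'(q*) < 1`. -/
theorem stmt_5 (p z q : ℝ) (hp : p ∈ Set.Ioo (0:ℝ) 1) (hz : 0 < z)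
    (hq : q ∈ Set.Ioo (0:ℝ) 1)
    (hfix : q = 1 - Real.exp (z * q * Real.log (1 - p))) :
    0 < deriv (fun q : ℝ => 1 - Real.exp (z * q * Real.log (1 - p))) q ∧
    deriv (fun q : ℝ => 1 - Real.exp (z * q * Real.log (1 - p))) q < 1 := by
  have hL : log (1 - p) < 0 := log_neg (by linarith [hp.2]) (by linarith [hp.1])
  have hE : exp (z * q * log (1 - p)) = 1 - q := by linarith
  rw [(hasDerivAt_one_sub_exp_mul_mul z (log (1 - p)) q).deriv, hE]
  constructor
  · have hslope : 0 < -(z * log (1 - p)) := neg_pos.mpr (mul_neg_of_pos_of_neg hz hL)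
    exact mul_pos hslope (by linarith [hq.2])
  · exact neg_mul_one_sub_lt_one_of_exp_mul_eq hq.1 (by rw [← hE, mul_right_comm])
end

section
/- For every x ∈ (0,1), the inequality (1-x)·e^{-1} < (1-x)^{1/x} holds. -/
/-- For `x ∈ (0,1)`, `(1-x) e⁻¹ < (1-x)^(1/x)`. -/
theorem stmt_6 :
    ∀ x ∈ Set.Ioo (0:ℝ) 1,
      (1 - x) * Real.exp (-1) < Real.exp (Real.log (1 - x) / x) := by
  rintro x ⟨hx0, hx1⟩
  have hx : 0 < 1 - x := by linarith
  -- After taking logarithms this is `y - 1 < y log y` for `y = 1 - x`.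
  have key : (1 - x) - 1 < (1 - x) * Real.log (1 - x) :=
    Real.self_sub_one_lt_mul_log hx.le (by linarith)
  calc (1 - x) * Real.exp (-1) = Real.exp (Real.log (1 - x) - 1) := by
        rw [Real.exp_sub, Real.exp_neg, Real.exp_log hx, div_eq_mul_inv]
    _ < Real.exp (Real.log (1 - x) / x) := by
        rw [Real.exp_lt_exp, lt_div_iff₀ hx0]
        linarith
end

section
/- If p ∈ (0,1), z > 0, and q* ∈ (0,1) satisfies 1 - q* = (1-p)^{z q*}, then q* > 1 - e·(1-p)^z. -/
/-- Lower bound on the nonzero equilibrium: if `1 - q* = (1-p)^(z q*)` then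
`q* > 1 - e (1-p)^z`. -/
theorem stmt_7 (p z q : ℝ) (hp : p ∈ Set.Ioo (0:ℝ) 1) (hz : 0 < z)
    (hq : q ∈ Set.Ioo (0:ℝ) 1)
    (hfix : 1 - q = Real.exp (z * q * Real.log (1 - p))) :
    q > 1 - Real.exp 1 * Real.exp (z * Real.log (1 - p)) := by
  obtain ⟨hq0, hq1⟩ := hq
  set L := Real.log (1 - p) with hL
  have hu : (0:ℝ) < 1 - q := by linarith
  have hlogu : Real.log (1 - q) = z * q * L := by rw [hfix, Real.log_exp]
  have h1 : Real.log (1 / (1 - q)) < 1 / (1 - q) - 1 :=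
    Real.log_lt_sub_one_of_pos (by positivity)
      (by
        intro h
        have : 1 - q = 1 := by field_simp at h; linarith
        linarith)
  rw [Real.log_div one_ne_zero (by linarith), Real.log_one] at h1
  -- multiply h1 by (1-q) > 0
  have key : (1 - q) * Real.log (1 - q) > -q := by
    have := mul_lt_mul_of_pos_left h1 hu
    have hne : (1 - q) ≠ 0 := by linarith
    field_simp at this
    nlinarith [this]
  rw [hlogu] at key
  have hstep : z * q * L < 1 + z * L := by nlinarith [key, hq0]
  have hlt : Real.exp (z * q * L) < Real.exp (1 + z * L) := Real.exp_lt_exp.mpr hstep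
  rw [Real.exp_add] at hlt
  linarith [hfix ▸ hlt]
end
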